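/- The slave offloading problem P1 with total offloaded bits ℓ is feasible if and only if ℓ ≤ U_K, where U_K is the total number of bits the helper's CPU can compute by the completion time. -/

import Mathlib

/-!
The helper computes at most `c_k` bits in epoch `k`, so at most `U_K = Σ c_k` bits in all;
this gives necessity. Conversely, if `ℓ ≤ U_K`, offload all `ℓ` bits in the first epoch: the
buffer then holds `max (ℓ - Σ_{j ≤ k} c_j) 0 ≤ ℓ ≤ Q` after epoch `k`, which is empty at `K`, and
by conservation of bits everything offloaded has been computed.
-/

/-- Buffer state recursion: `B_0 = 0`,
`B_k = B_{k−1} + ℓ_k − min{B_{k−1} + ℓ_k, c_k}`, where `c_k = a_k τ_k f_h / C`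
is the per-epoch CPU capacity (in bits) and `ℓ_k` the per-epoch offloaded bits. -/
def Bfun (c x : ℕ → ℝ) : ℕ → ℝ
  | 0 => 0
  | k + 1 => Bfun c x k + x (k + 1) - min (Bfun c x k + x (k + 1)) (c (k + 1))

/-- Bits computed by the helper in epoch `k`: `d_k = min{B_{k−1} + ℓ_k, c_k}`. -/
def dfun (c x : ℕ → ℝ) (k : ℕ) : ℝ := min (Bfun c x (k - 1) + x k) (c k)

open Finset

lemma dfun_le (c x : ℕ → ℝ) (k : ℕ) : dfun c x k ≤ c k :=
  min_le_right _ _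

lemma Bfun_succ (c x : ℕ → ℝ) (k : ℕ) :
    Bfun c x (k + 1) = max (Bfun c x k + x (k + 1) - c (k + 1)) 0 := by
  rw [Bfun]
  rcases le_total (Bfun c x k + x (k + 1)) (c (k + 1)) with h | h
  · rw [min_eq_left h, max_eq_right (by linarith)]
    ring
  · rw [min_eq_right h, max_eq_left (by linarith)]

lemma Bfun_eq_sum_sub_sum_dfun (c x : ℕ → ℝ) (K : ℕ) :
    Bfun c x K = ∑ k ∈ Icc 1 K, x k - ∑ k ∈ Icc 1 K, dfun c x k := by
  induction K with
  | zero => simp [Bfun]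
  | succ n ih =>
    rw [sum_Icc_succ_top (by omega), sum_Icc_succ_top (by omega), Bfun, ih, dfun,
      Nat.add_sub_cancel, ih]
    ring

lemma Bfun_single_one (c : ℕ → ℝ) (hc : ∀ k, 0 ≤ c k) (ℓ : ℝ) (k : ℕ) :
    Bfun c (Pi.single 1 ℓ) (k + 1) = max (ℓ - ∑ j ∈ Icc 1 (k + 1), c j) 0 := by
  induction k with
  | zero =>
    rw [Bfun_succ]
    simp [Bfun]
  | succ n ih =>
    rw [Bfun_succ, ih, Pi.single_eq_of_ne (by omega), add_zero,
      sum_Icc_succ_top (b := n + 1) (by omega)]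
    have hcn := hc (n + 2)
    rcases le_total (ℓ - ∑ j ∈ Icc 1 (n + 1), c j) 0 with h | h
    · rw [max_eq_right h, max_eq_right (by linarith), max_eq_right (by linarith)]
    · rw [max_eq_left h, sub_add_eq_sub_sub]

lemma Bfun_single_one_le (c : ℕ → ℝ) (hc : ∀ k, 0 ≤ c k) {ℓ : ℝ} (hℓ : 0 ≤ ℓ) (k : ℕ) :
    Bfun c (Pi.single 1 ℓ) k ≤ ℓ := by
  cases k with
  | zero => simpa [Bfun] using hℓ
  | succ n =>
    rw [Bfun_single_one c hc]
    exact max_le (sub_le_self _ (sum_nonneg fun j _ => hc j)) hℓ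

/-- Problem P1 (with large buffer `Q ≥ ℓ`) is feasible iff `ℓ ≤ U_K`, where
`U_K = Σ_{k=1}^K c_k` is the total computable bits of the helper's CPU. -/
theorem P1_feasible_iff (K : ℕ) (c : ℕ → ℝ) (Q ℓ : ℝ)
    (hc : ∀ k, 0 ≤ c k) (hℓ : 0 ≤ ℓ) (hQ : ℓ ≤ Q) :
    (∃ x : ℕ → ℝ, (∀ j, 0 ≤ x j) ∧
        (∑ k ∈ Finset.Icc 1 K, dfun c x k) = ℓ ∧
        (∑ k ∈ Finset.Icc 1 K, x k) = ℓ ∧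
        ∀ k ≤ K, Bfun c x k ≤ Q) ↔
      ℓ ≤ ∑ k ∈ Finset.Icc 1 K, c k := by
  constructor
  · rintro ⟨x, -, hd, -, -⟩
    exact hd ▸ sum_le_sum fun k _ => dfun_le c x k
  · intro hU
    cases K with
    | zero =>
      obtain rfl : ℓ = 0 := le_antisymm (by simpa using hU) hℓ
      exact ⟨0, fun _ => le_rfl, by simp [dfun], by simp, fun k hk => by
        simpa [Nat.le_zero.mp hk, Bfun] using hQ⟩
    | succ n =>
      have hsum : ∑ k ∈ Icc 1 (n + 1), Pi.single 1 ℓ k = ℓ := by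
        simp [sum_pi_single']
      have hempty : Bfun c (Pi.single 1 ℓ) (n + 1) = 0 := by
        rw [Bfun_single_one c hc]
        exact max_eq_right (sub_nonpos.mpr hU)
      have hx : 0 ≤ Pi.single (M := fun _ => ℝ) 1 ℓ := Pi.single_nonneg.mpr hℓ
      refine ⟨Pi.single 1 ℓ, hx, ?_, hsum, fun k _ =>
        (Bfun_single_one_le c hc hℓ k).trans hQ⟩
      linarith [Bfun_eq_sum_sub_sum_dfun c (Pi.single 1 ℓ) (n + 1)]
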